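/- Let G be a group with finite generating set Σ, let N be a characteristic subgroup of G (meaning φ(N) = N for every automorphism φ of G), let Q = G/N, and let Σ̄ ⊆ Q be the image of Σ under the quotient map. Then for every n ∈ ℕ, the number of Aut(Q)-orbits of Q containing an element of word length at most n with respect to Σ̄ is at most the number of Aut(G)-orbits of G containing an element of word length at most n with respect to Σ. In particular α_{Q,Σ̄} ≼ α_{G,Σ}. -/

import Mathlib

/-- The ball of radius `n` in a group with respect to a generating set `S`:
elements expressible as a product of at most `n` elements of `S ∪ S⁻¹`. -/
def wordBall {G : Type*} [Group G] (S : Set G) (n : ℕ) : Set G :=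
  {g | ∃ l : List G, (∀ x ∈ l, x ∈ S ∨ x⁻¹ ∈ S) ∧ l.length ≤ n ∧ l.prod = g}

/-- The automorphic growth function: the number of `Aut G`-orbits of `G`
containing an element of word length at most `n` with respect to `S`. -/
noncomputable def autGrowth {G : Type*} [Group G] (S : Set G) (n : ℕ) : ℕ :=
  Set.ncard (Quotient.mk (MulAction.orbitRel (MulAut G) G) '' wordBall S n)

def GrowthLe (f g : ℕ → ℕ) : Prop :=
  ∃ lam : ℕ, 0 < lam ∧ ∀ n, f n ≤ lam * g (lam * n + lam) + lam

def GrowthEquiv (f g : ℕ → ℕ) : Prop := GrowthLe f g ∧ GrowthLe g f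


/-!
An automorphism of `G` preserves the characteristic subgroup `N` and hence induces an
automorphism of `Q = G ⧸ N`, so the quotient map sends `Aut G`-orbits into `Aut Q`-orbits.
Since the ball of radius `n` in `Q` for the image generating set is the image of the ball of
radius `n` in `G`, the orbits meeting it are images of the orbits meeting the ball in `G`,
and there are at most as many of them. The growth comparison follows because the
automorphic growth function of `G` is monotone.
-/

section WordBall

variable {G H : Type*} [Group G] [Group H]

theorem wordBall_mono (S : Set G) : Monotone (wordBall S) := by
  rintro m n hmn g ⟨l, hl, hlen, rfl⟩
  exact ⟨l, hl, hlen.trans hmn, rfl⟩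

theorem wordBall_finite {S : Set G} (hS : S.Finite) (n : ℕ) : (wordBall S n).Finite := by
  let T : Set G := S ∪ S⁻¹
  have : Finite T := hS.union hS.inv
  refine ((List.finite_length_le T n).image fun l => (l.map (↑)).prod).subset ?_
  rintro g ⟨l, hl, hlen, rfl⟩
  refine ⟨l.attach.map fun x => ⟨x.1, hl x.1 x.2⟩, by simpa using hlen, ?_⟩
  simp [List.map_map, Function.comp_def]

theorem wordBall_image (f : G →* H) (S : Set G) (n : ℕ) :
    wordBall (f '' S) n = f '' wordBall S n := by
  apply Set.Subset.antisymm
  · rintro _ ⟨l, hl, hlen, rfl⟩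
    have hlift : ∀ x ∈ l, ∃ y, (y ∈ S ∨ y⁻¹ ∈ S) ∧ f y = x := by
      intro x hx
      rcases hl x hx with ⟨s, hs, rfl⟩ | ⟨s, hs, hsx⟩
      · exact ⟨s, Or.inl hs, rfl⟩
      · exact ⟨s⁻¹, Or.inr (by rwa [inv_inv]), by rw [map_inv, hsx, inv_inv]⟩
    choose y hyS hyf using hlift
    have hmap : (l.attach.map fun x => y x.1 x.2).map f = l := by
      simp [List.map_map, Function.comp_def, hyf]
    refine ⟨_, ⟨l.attach.map fun x => y x.1 x.2, ?_, by simpa using hlen, rfl⟩, ?_⟩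
    · simp only [List.mem_map, List.mem_attach, true_and, Subtype.exists]
      rintro _ ⟨x, hx, rfl⟩
      exact hyS x hx
    · rw [map_list_prod, hmap]
  · rintro _ ⟨_, ⟨l, hl, hlen, rfl⟩, rfl⟩
    refine ⟨l.map f, ?_, by simpa using hlen, (map_list_prod f l).symm⟩
    simp only [List.mem_map, forall_exists_index, and_imp, forall_apply_eq_imp_iff₂]
    intro x hx
    rcases hl x hx with hs | hs
    · exact Or.inl ⟨x, hs, rfl⟩
    · exact Or.inr ⟨x⁻¹, hs, map_inv f x⟩

end WordBall

theorem autGrowth_mono {G : Type*} [Group G] {S : Set G} (hS : S.Finite) :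
    Monotone (autGrowth S) := fun _ _ hmn =>
  Set.ncard_le_ncard (Set.image_mono (wordBall_mono S hmn)) ((wordBall_finite hS _).image _)

theorem Set.ncard_image_quotient_mk_image_le {α β : Type*} {r : Setoid α} {r' : Setoid β}
    (f : α → β) (hf : ∀ a b, r a b → r' (f a) (f b)) {A : Set α} (hA : A.Finite) :
    (Quotient.mk r' '' (f '' A)).ncard ≤ (Quotient.mk r '' A).ncard := by
  have himage : Quotient.mk r' '' (f '' A) = Quotient.map f hf '' (Quotient.mk r '' A) := by
    simp only [Set.image_image]
    rfl
  rw [himage]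
  exact Set.ncard_image_le (hA.image _)

theorem orbitRel_quotientGroup_mk {G : Type*} [Group G] (N : Subgroup G) [N.Normal]
    [hN : N.Characteristic] {a b : G} (hab : MulAction.orbitRel (MulAut G) G a b) :
    MulAction.orbitRel (MulAut (G ⧸ N)) (G ⧸ N) (a : G ⧸ N) b := by
  obtain ⟨φ, rfl⟩ := hab
  exact ⟨QuotientGroup.congr N N φ (Subgroup.characteristic_iff_map_eq.mp hN φ), rfl⟩

theorem GrowthLe.of_le_of_monotone {f g : ℕ → ℕ} (hfg : ∀ n, f n ≤ g n) (hg : Monotone g) :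
    GrowthLe f g :=
  ⟨1, one_pos, fun n => by
    have := hg (show n ≤ 1 * n + 1 by omega)
    linarith [hfg n]⟩

theorem automorphic_growth_quotient_le_general {G : Type*} [Group G]
    (S : Finset G)
    (N : Subgroup G) [N.Normal]
    (hchar : ∀ φ : MulAut G, Subgroup.map φ.toMonoidHom N = N) :
    (∀ n : ℕ,
      autGrowth ((QuotientGroup.mk '' (S : Set G)) : Set (G ⧸ N)) n ≤
        autGrowth (S : Set G) n) ∧
    GrowthLe (autGrowth ((QuotientGroup.mk '' (S : Set G)) : Set (G ⧸ N)))
      (autGrowth (S : Set G)) := by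
  have : N.Characteristic := Subgroup.characteristic_iff_map_eq.mpr hchar
  have hle (n : ℕ) :
      autGrowth ((QuotientGroup.mk '' (S : Set G)) : Set (G ⧸ N)) n ≤
        autGrowth (S : Set G) n := by
    rw [autGrowth, ← QuotientGroup.coe_mk', wordBall_image]
    exact Set.ncard_image_quotient_mk_image_le _ (fun _ _ => orbitRel_quotientGroup_mk N)
      (wordBall_finite S.finite_toSet n)
  exact ⟨hle, GrowthLe.of_le_of_monotone hle (autGrowth_mono S.finite_toSet)⟩

/-- quotients by characteristic subgroups have smaller automorphic
growth. -/
theorem automorphic_growth_quotient_le {G : Type*} [Group G]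
    (S : Finset G) (hS : Subgroup.closure (S : Set G) = ⊤)
    (N : Subgroup G) [N.Normal]
    (hchar : ∀ φ : MulAut G, Subgroup.map φ.toMonoidHom N = N) :
    (∀ n : ℕ,
      autGrowth ((QuotientGroup.mk '' (S : Set G)) : Set (G ⧸ N)) n ≤
        autGrowth (S : Set G) n) ∧
    GrowthLe (autGrowth ((QuotientGroup.mk '' (S : Set G)) : Set (G ⧸ N)))
      (autGrowth (S : Set G)) :=
  automorphic_growth_quotient_le_general S N hchar
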